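/- Let $A$ be a local $\mathbb{Q}$-algebra and $n \geq 1$. The group $\phi_{2,n} = \ker\{K_2^M(A[\sigma]/\sigma^{n+1}) \to K_2^M(A[\sigma]/\sigma^{n})\}$ is generated by symbols of the form $\{1 + c\sigma^{n}, a\}$ and $\{1 + e\sigma^{n}, 1-\sigma\}$ with $a, e \in A^*$ and $c \in A$, assuming the van der Kallen description of the formal tangent space $TK_2^M$. -/

import Mathlib

set_option synthInstance.maxHeartbeats 1000000
set_option maxHeartbeats 1600000

open FreeAbelianGroup

/-- Generating relations for the Milnor `K₂` of a commutative ring: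
bilinearity in both slots and the Steinberg relation. -/
def K2Rel (R : Type) [CommRing R] : AddSubgroup (FreeAbelianGroup (Rˣ × Rˣ)) :=
  AddSubgroup.closure
    ({ x | ∃ u v w : Rˣ, x = of (u * v, w) - of (u, w) - of (v, w) } ∪
     { x | ∃ u v w : Rˣ, x = of (u, v * w) - of (u, v) - of (u, w) } ∪
     { x | ∃ u v : Rˣ, (u : R) + (v : R) = 1 ∧ x = of (u, v) })

/-- The Milnor `K`-group `K₂ᴹ(R)`: symbols `{u,v}` of pairs of units, bilinear,
subject to the Steinberg relation `{u, 1-u} = 0`. -/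
def K2M (R : Type) [CommRing R] := FreeAbelianGroup (Rˣ × Rˣ) ⧸ K2Rel R

instance (R : Type) [CommRing R] : AddCommGroup (K2M R) :=
  QuotientAddGroup.Quotient.addCommGroup _

/-- The Milnor symbol `{u, v} ∈ K₂ᴹ(R)`. -/
def K2M.symbol {R : Type} [CommRing R] (u v : Rˣ) : K2M R :=
  QuotientAddGroup.mk (of (u, v))

/-- Functoriality of `K₂ᴹ` along ring homomorphisms. -/
def K2M.map {R S : Type} [CommRing R] [CommRing S] (f : R →+* S) : K2M R →+ K2M S :=
  QuotientAddGroup.map _ _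
    (FreeAbelianGroup.map (fun p => (Units.map (f : R →* S) p.1, Units.map (f : R →* S) p.2)))
    (by
      rw [← AddSubgroup.map_le_iff_le_comap, K2Rel,
        AddMonoidHom.map_closure]
      refine AddSubgroup.closure_le _ |>.2 ?_
      rintro _ ⟨x, hx, rfl⟩
      refine AddSubgroup.subset_closure ?_
      rcases hx with ((⟨u, v, w, rfl⟩ | ⟨u, v, w, rfl⟩) | ⟨u, v, h, rfl⟩)
      · refine Or.inl (Or.inl ⟨Units.map f u, Units.map f v, Units.map f w, ?_⟩)
        simp [map_sub, map_of_apply, map_mul]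
      · refine Or.inl (Or.inr ⟨Units.map f u, Units.map f v, Units.map f w, ?_⟩)
        simp [map_sub, map_of_apply, map_mul]
      · refine Or.inr ⟨Units.map f u, Units.map f v, ?_, ?_⟩
        · simpa using congrArg f h
        · simp [map_of_apply])

/-- The truncated polynomial ring `A[σ]/(σ^m)`. -/
abbrev TruncPoly (A : Type) [CommRing A] (m : ℕ) : Type :=
  Polynomial A ⧸ (Ideal.span {(Polynomial.X : Polynomial A) ^ m})

/-- The image of `σ` in `A[σ]/(σ^m)`. -/
noncomputable def tSigma (A : Type) [CommRing A] (m : ℕ) : TruncPoly A m :=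
  Ideal.Quotient.mk _ Polynomial.X

/-- The image of `a ∈ A` in `A[σ]/(σ^m)`. -/
noncomputable def tConst {A : Type} [CommRing A] (m : ℕ) (a : A) : TruncPoly A m :=
  Ideal.Quotient.mk _ (Polynomial.C a)

/-- The projection `A[σ]/σ^(n+1) → A[σ]/σ^n`. -/
noncomputable def truncProj (A : Type) [CommRing A] (n : ℕ) : TruncPoly A (n + 1) →+* TruncPoly A n :=
  Ideal.Quotient.factor
    (Ideal.span_singleton_le_span_singleton.mpr (pow_dvd_pow _ (Nat.le_succ n)))

/-- The projection `B[ε]/ε² → B`, `ε ↦ 0`, as a ring homomorphism. -/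
def dualNumberProj (B : Type) [CommRing B] : DualNumber B →+* B :=
  (TrivSqZeroExt.fstHom ℤ B B).toRingHom

/-- The image of `a ∈ A` in `A[σ]/(σ^m)` viewed inside the dual numbers. -/
noncomputable def tConstEps {A : Type} [CommRing A] (m : ℕ) (a : A) :
    DualNumber (TruncPoly A m) :=
  TrivSqZeroExt.inl (tConst m a)

/-! ### Auxiliary lemmas -/


section K2MLemmas

variable {R S : Type} [CommRing R] [CommRing S]

lemma K2M.symbol_mul_left (u v w : Rˣ) :
    K2M.symbol (u * v) w = K2M.symbol u w + K2M.symbol v w := by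
  have h : (of ((u * v, w) : Rˣ × Rˣ) - of (u, w) - of (v, w)) ∈ K2Rel R :=
    AddSubgroup.subset_closure (Or.inl (Or.inl ⟨u, v, w, rfl⟩))
  have h2 := (QuotientAddGroup.eq_zero_iff _).mpr h
  rw [show of ((u * v, w) : Rˣ × Rˣ) - of (u, w) - of (v, w)
      = of (u * v, w) - (of (u, w) + of (v, w)) by ring] at h2
  rw [QuotientAddGroup.mk_sub, sub_eq_zero] at h2
  rw [QuotientAddGroup.mk_add] at h2
  exact h2

lemma K2M.symbol_mul_right (u v w : Rˣ) :
    K2M.symbol u (v * w) = K2M.symbol u v + K2M.symbol u w := by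
  have h : (of ((u, v * w) : Rˣ × Rˣ) - of (u, v) - of (u, w)) ∈ K2Rel R :=
    AddSubgroup.subset_closure (Or.inl (Or.inr ⟨u, v, w, rfl⟩))
  have h2 := (QuotientAddGroup.eq_zero_iff _).mpr h
  rw [show of ((u, v * w) : Rˣ × Rˣ) - of (u, v) - of (u, w)
      = of (u, v * w) - (of (u, v) + of (u, w)) by ring] at h2
  rw [QuotientAddGroup.mk_sub, sub_eq_zero] at h2
  rw [QuotientAddGroup.mk_add] at h2
  exact h2

lemma K2M.symbol_one_left (w : Rˣ) : K2M.symbol (1 : Rˣ) w = 0 := by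
  have h := K2M.symbol_mul_left (1 : Rˣ) 1 w
  rw [mul_one] at h
  exact (left_eq_add.mp h)

lemma K2M.symbol_one_right (w : Rˣ) : K2M.symbol w (1 : Rˣ) = 0 := by
  have h := K2M.symbol_mul_right w (1 : Rˣ) 1
  rw [mul_one] at h
  exact (left_eq_add.mp h)

lemma K2M.symbol_steinberg (u v : Rˣ) (h : (u : R) + (v : R) = 1) :
    K2M.symbol u v = 0 :=
  (QuotientAddGroup.eq_zero_iff _).mpr
    (AddSubgroup.subset_closure (Or.inr ⟨u, v, h, rfl⟩))

lemma K2M.map_symbol (f : R →+* S) (u v : Rˣ) :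
    K2M.map f (K2M.symbol u v)
      = K2M.symbol (Units.map (f : R →* S) u) (Units.map (f : R →* S) v) := by
  unfold K2M.map K2M.symbol
  rfl

end K2MLemmas

section RingLemmas

variable (A : Type) [CommRing A]

lemma tSigma_pow_self (m : ℕ) : tSigma A m ^ m = 0 := by
  rw [tSigma, ← map_pow, Ideal.Quotient.eq_zero_iff_mem]
  exact Ideal.subset_span (Set.mem_singleton _)

variable {A}

lemma tConst_add (m : ℕ) (a b : A) :
    tConst m (a + b) = tConst m a + tConst m b := by
  simp [tConst, map_add]

lemma tConst_one (m : ℕ) : tConst m (1 : A) = 1 := by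
  simp [tConst]

variable (A) in
lemma sigma_sq (n : ℕ) (hn : 1 ≤ n) :
    (tSigma A (n + 1) ^ n) * (tSigma A (n + 1) ^ n) = 0 := by
  rw [← pow_add]
  have h : n + n = (n + 1) + (n - 1) := by omega
  rw [h, pow_add, tSigma_pow_self, zero_mul]

lemma truncProj_mk (n : ℕ) (p : Polynomial A) :
    truncProj A n (Ideal.Quotient.mk _ p) = Ideal.Quotient.mk _ p :=
  Ideal.Quotient.factor_mk _ _

lemma ker_truncProj {n : ℕ} {b : TruncPoly A (n + 1)} (h : truncProj A n b = 0) :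
    ∃ a : A, b = tConst (n + 1) a * tSigma A (n + 1) ^ n := by
  obtain ⟨p, rfl⟩ := Ideal.Quotient.mk_surjective b
  rw [truncProj_mk, Ideal.Quotient.eq_zero_iff_mem, Ideal.mem_span_singleton] at h
  obtain ⟨q, rfl⟩ := h
  refine ⟨q.coeff 0, ?_⟩
  rw [tConst, tSigma, ← map_pow, ← map_mul, Ideal.Quotient.eq, Ideal.mem_span_singleton]
  obtain ⟨r, hr⟩ := Polynomial.X_dvd_iff.mpr (by simp : (q - Polynomial.C (q.coeff 0)).coeff 0 = 0)
  exact ⟨r, by rw [pow_succ]; linear_combination (Polynomial.X : Polynomial A) ^ n * hr⟩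

lemma mul_sigma_pow {n : ℕ} (c : TruncPoly A (n + 1)) :
    ∃ c₀ : A, c * tSigma A (n + 1) ^ n = tConst (n + 1) c₀ * tSigma A (n + 1) ^ n := by
  obtain ⟨q, rfl⟩ := Ideal.Quotient.mk_surjective c
  refine ⟨q.coeff 0, ?_⟩
  rw [tConst, tSigma, ← map_pow, ← map_mul, ← map_mul, Ideal.Quotient.eq,
    Ideal.mem_span_singleton]
  obtain ⟨r, hr⟩ := Polynomial.X_dvd_iff.mpr (by simp : (q - Polynomial.C (q.coeff 0)).coeff 0 = 0)
  exact ⟨r, by rw [pow_succ]; linear_combination (Polynomial.X : Polynomial A) ^ n * hr⟩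

lemma isUnit_one_add_tc {n : ℕ} (hn : 1 ≤ n) (a : A) :
    IsUnit (1 + tConst (n + 1) a * tSigma A (n + 1) ^ n) := by
  refine IsNilpotent.isUnit_one_add ⟨2, ?_⟩
  have h := sigma_sq A n hn
  rw [pow_two]
  linear_combination (tConst (n + 1) a * tConst (n + 1) a) * h

lemma isUnit_one_sub_sigma (n : ℕ) : IsUnit (1 - tSigma A (n + 1)) :=
  IsNilpotent.isUnit_one_sub ⟨n + 1, tSigma_pow_self A (n + 1)⟩

lemma truncProj_surjective (n : ℕ) : Function.Surjective (truncProj A n) := by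
  intro y
  obtain ⟨p, rfl⟩ := Ideal.Quotient.mk_surjective y
  exact ⟨Ideal.Quotient.mk _ p, truncProj_mk n p⟩

lemma exists_two_units [IsLocalRing A] [Algebra ℚ A] (a : A) :
    ∃ x y : Aˣ, (x : A) + (y : A) = a := by
  by_cases h : IsUnit (a - 1)
  · exact ⟨h.unit, 1, by simp⟩
  · have h2 : IsUnit (2 : A) := by
      rw [← map_ofNat (algebraMap ℚ A) 2]
      exact (isUnit_iff_ne_zero.mpr (by norm_num : (2:ℚ) ≠ 0)).map (algebraMap ℚ A)
    have h1 : IsUnit (a + 1) := by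
      by_contra hnot
      have ha : a - 1 ∈ IsLocalRing.maximalIdeal A := h
      have hb : a + 1 ∈ IsLocalRing.maximalIdeal A := hnot
      have h2' : (2 : A) ∈ IsLocalRing.maximalIdeal A := by
        have hs := Ideal.sub_mem _ hb ha
        have he : (a + 1) - (a - 1) = 2 := by ring
        rwa [he] at hs
      exact (IsLocalRing.mem_maximalIdeal _).mp h2' h2
    exact ⟨h1.unit, -1, by simp⟩

end RingLemmas

section EvalEps

variable {A : Type} [CommRing A] {n : ℕ}

/-- The evaluation map `B[ε]/ε² → B`, `ε ↦ σ^n`, for `B = A[σ]/σ^(n+1)`. -/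
noncomputable def evalEps (A : Type) [CommRing A] (n : ℕ) (hn : 1 ≤ n) :
    DualNumber (TruncPoly A (n + 1)) →+* TruncPoly A (n + 1) where
  toFun x := x.fst + x.snd * tSigma A (n + 1) ^ n
  map_one' := by simp
  map_zero' := by simp
  map_add' x y := by
    simp only [TrivSqZeroExt.fst_add, TrivSqZeroExt.snd_add]
    ring
  map_mul' x y := by
    have h := sigma_sq A n hn
    simp only [TrivSqZeroExt.fst_mul, TrivSqZeroExt.snd_mul, smul_eq_mul,
      MulOpposite.smul_eq_mul_unop, MulOpposite.unop_op]
    linear_combination (-(TrivSqZeroExt.snd x * TrivSqZeroExt.snd y)) * h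

lemma evalEps_apply (hn : 1 ≤ n) (x : DualNumber (TruncPoly A (n + 1))) :
    evalEps A n hn x = x.fst + x.snd * tSigma A (n + 1) ^ n := rfl

end EvalEps
section MoreLemmas

variable {A : Type} [CommRing A]

lemma truncProj_tConst (n : ℕ) (c : A) :
    truncProj A n (tConst (n + 1) c) = tConst n c :=
  truncProj_mk n _

lemma truncProj_tSigma (n : ℕ) :
    truncProj A n (tSigma A (n + 1)) = tSigma A n :=
  truncProj_mk n _

lemma units_lift {n : ℕ} (hn : 1 ≤ n) (u' : (TruncPoly A n)ˣ) :
    ∃ u : (TruncPoly A (n + 1))ˣ,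
      Units.map (truncProj A n : TruncPoly A (n + 1) →* TruncPoly A n) u = u' := by
  obtain ⟨b, hb⟩ := truncProj_surjective n (u' : TruncPoly A n)
  obtain ⟨c, hc⟩ := truncProj_surjective n ((u'⁻¹ : (TruncPoly A n)ˣ) : TruncPoly A n)
  have h0 : truncProj A n (b * c - 1) = 0 := by
    rw [map_sub, map_mul, hb, hc, map_one]
    rw [Units.mul_inv]
    exact sub_self 1
  obtain ⟨a, ha⟩ := ker_truncProj h0
  have hbc : b * c = 1 + tConst (n + 1) a * tSigma A (n + 1) ^ n := by
    linear_combination ha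
  have hu : IsUnit b := isUnit_of_mul_isUnit_left (hbc ▸ isUnit_one_add_tc hn a)
  refine ⟨hu.unit, Units.ext ?_⟩
  rw [Units.coe_map]
  simpa [hu.unit_spec] using hb

variable (B : Type) [CommRing B]

lemma dualNumberProj_apply (x : DualNumber B) : dualNumberProj B x = x.fst := rfl

variable {B}

lemma fst_one_add_inl_eps (c : B) :
    (1 + TrivSqZeroExt.inl c * DualNumber.eps : DualNumber B).fst = 1 := by
  rw [TrivSqZeroExt.fst_add, TrivSqZeroExt.fst_one, TrivSqZeroExt.fst_mul,
    TrivSqZeroExt.fst_inl, DualNumber.fst_eps, mul_zero, add_zero]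

lemma snd_one_add_inl_eps (c : B) :
    (1 + TrivSqZeroExt.inl c * DualNumber.eps : DualNumber B).snd = c := by
  rw [TrivSqZeroExt.snd_add, TrivSqZeroExt.snd_one, TrivSqZeroExt.snd_mul,
    TrivSqZeroExt.snd_inl, TrivSqZeroExt.fst_inl, DualNumber.snd_eps, DualNumber.fst_eps]
  simp

lemma isUnit_one_add_inl_eps (c : B) :
    IsUnit (1 + TrivSqZeroExt.inl c * DualNumber.eps : DualNumber B) :=
  IsNilpotent.isUnit_one_add ⟨2, by
    rw [pow_two, mul_mul_mul_comm, DualNumber.eps_mul_eps, mul_zero]⟩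

end MoreLemmas

section EvalEps2

variable {A : Type} [CommRing A] {n : ℕ}

lemma evalEps_one_add_inl_eps (hn : 1 ≤ n) (c : TruncPoly A (n + 1)) :
    evalEps A n hn (1 + TrivSqZeroExt.inl c * DualNumber.eps)
      = 1 + c * tSigma A (n + 1) ^ n := by
  rw [evalEps_apply, fst_one_add_inl_eps, snd_one_add_inl_eps]

lemma evalEps_inl (hn : 1 ≤ n) (b : TruncPoly A (n + 1)) :
    evalEps A n hn (TrivSqZeroExt.inl b) = b := by
  rw [evalEps_apply]
  simp

end EvalEps2
section MainAux

variable (A : Type) [CommRing A] (n : ℕ)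

/-- The generating set for `φ_{2,n}`. -/
def genSet : Set (K2M (TruncPoly A (n + 1))) :=
  { x : K2M (TruncPoly A (n + 1)) |
          (∃ (c : A) (a : Aˣ) (u v : (TruncPoly A (n + 1))ˣ),
            (u : TruncPoly A (n + 1)) = 1 + tConst (n + 1) c * tSigma A (n + 1) ^ n ∧
            (v : TruncPoly A (n + 1)) = tConst (n + 1) (a : A) ∧
            x = K2M.symbol u v) ∨
          (∃ (e : Aˣ) (u v : (TruncPoly A (n + 1))ˣ),
            (u : TruncPoly A (n + 1)) = 1 + tConst (n + 1) (e : A) * tSigma A (n + 1) ^ n ∧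
            (v : TruncPoly A (n + 1)) = 1 - tSigma A (n + 1) ∧
            x = K2M.symbol u v) }

/-- The van der Kallen generating set for `TK₂ᴹ`. -/
def vdkSet : Set (K2M (DualNumber (TruncPoly A (n + 1)))) :=
  { x : K2M (DualNumber (TruncPoly A (n + 1))) |
          (∃ (c : TruncPoly A (n + 1)) (a : Aˣ) (u v : (DualNumber (TruncPoly A (n + 1)))ˣ),
            (u : DualNumber (TruncPoly A (n + 1))) = 1 + TrivSqZeroExt.inl c * DualNumber.eps ∧
            (v : DualNumber (TruncPoly A (n + 1))) = tConstEps (n + 1) (a : A) ∧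
            x = K2M.symbol u v) ∨
          (∃ (e : TruncPoly A (n + 1)) (u v : (DualNumber (TruncPoly A (n + 1)))ˣ),
            (u : DualNumber (TruncPoly A (n + 1))) = 1 + TrivSqZeroExt.inl e * DualNumber.eps ∧
            (v : DualNumber (TruncPoly A (n + 1))) =
              TrivSqZeroExt.inl (1 - tSigma A (n + 1)) ∧
            x = K2M.symbol u v) }

/-- The closure of the generating set. -/
noncomputable def NN : AddSubgroup (K2M (TruncPoly A (n + 1))) := AddSubgroup.closure (genSet A n)

variable {A n}

lemma genN1 (c : A) (a : Aˣ) (u v : (TruncPoly A (n + 1))ˣ)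
    (hu : (u : TruncPoly A (n + 1)) = 1 + tConst (n + 1) c * tSigma A (n + 1) ^ n)
    (hv : (v : TruncPoly A (n + 1)) = tConst (n + 1) (a : A)) :
    K2M.symbol u v ∈ NN A n :=
  AddSubgroup.subset_closure (Or.inl ⟨c, a, u, v, hu, hv, rfl⟩)

lemma genN2 (e : Aˣ) (u v : (TruncPoly A (n + 1))ˣ)
    (hu : (u : TruncPoly A (n + 1)) = 1 + tConst (n + 1) (e : A) * tSigma A (n + 1) ^ n)
    (hv : (v : TruncPoly A (n + 1)) = 1 - tSigma A (n + 1)) :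
    K2M.symbol u v ∈ NN A n :=
  AddSubgroup.subset_closure (Or.inr ⟨e, u, v, hu, hv, rfl⟩)

set_option maxHeartbeats 1000000 in
lemma hstar2 [IsLocalRing A] [Algebra ℚ A] (hn : 1 ≤ n)
    (e₀ : A) (u v : (TruncPoly A (n + 1))ˣ)
    (hu : (u : TruncPoly A (n + 1)) = 1 + tConst (n + 1) e₀ * tSigma A (n + 1) ^ n)
    (hv : (v : TruncPoly A (n + 1)) = 1 - tSigma A (n + 1)) :
    K2M.symbol u v ∈ NN A n := by
  obtain ⟨x, y, hxy⟩ := exists_two_units e₀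
  have hu₁ := isUnit_one_add_tc (A := A) hn (x : A)
  have hu₂ := isUnit_one_add_tc (A := A) hn (y : A)
  have hprod : u = hu₁.unit * hu₂.unit := by
    apply Units.ext
    rw [Units.val_mul, IsUnit.unit_spec, IsUnit.unit_spec, hu, ← hxy, tConst_add]
    linear_combination (-(tConst (n + 1) (x : A) * tConst (n + 1) (y : A))) * sigma_sq A n hn
  rw [hprod, K2M.symbol_mul_left]
  exact add_mem (genN2 x _ v hu₁.unit_spec hv) (genN2 y _ v hu₂.unit_spec hv)

set_option maxHeartbeats 2000000 in
lemma hkerf [IsLocalRing A] [Algebra ℚ A] (hn : 1 ≤ n)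
    (hvdK : (K2M.map (dualNumberProj (TruncPoly A (n + 1)))).ker =
      AddSubgroup.closure (vdkSet A n))
    (y : K2M (DualNumber (TruncPoly A (n + 1))))
    (hy : y ∈ (K2M.map (dualNumberProj (TruncPoly A (n + 1)))).ker) :
    K2M.map (evalEps A n hn) y ∈ NN A n := by
  rw [hvdK] at hy
  induction hy using AddSubgroup.closure_induction with
  | zero => rw [map_zero]; exact zero_mem _
  | add p q _ _ hp hq => rw [map_add]; exact add_mem hp hq
  | neg p _ hp => rw [map_neg]; exact neg_mem hp
  | mem z hz => ?_
  obtain (⟨c, a, u, v, hu, hv, rfl⟩ | ⟨e, u, v, hu, hv, rfl⟩) := hz <;> rw [K2M.map_symbol]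
  · obtain ⟨c₀, hc₀⟩ := mul_sigma_pow c
    refine genN1 c₀ a _ _ ?_ ?_
    · rw [Units.coe_map]
      show evalEps A n hn (u : DualNumber (TruncPoly A (n + 1))) = _
      rw [hu, evalEps_one_add_inl_eps, hc₀]
    · rw [Units.coe_map]
      show evalEps A n hn (v : DualNumber (TruncPoly A (n + 1))) = _
      rw [hv, tConstEps, evalEps_inl]
  · obtain ⟨e₀, he₀⟩ := mul_sigma_pow e
    refine hstar2 hn e₀ _ _ ?_ ?_
    · rw [Units.coe_map]
      show evalEps A n hn (u : DualNumber (TruncPoly A (n + 1))) = _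
      rw [hu, evalEps_one_add_inl_eps, he₀]
    · rw [Units.coe_map]
      show evalEps A n hn (v : DualNumber (TruncPoly A (n + 1))) = _
      rw [hv, evalEps_inl]

set_option maxHeartbeats 2000000 in
lemma hstarL [IsLocalRing A] [Algebra ℚ A] (hn : 1 ≤ n)
    (hvdK : (K2M.map (dualNumberProj (TruncPoly A (n + 1)))).ker =
      AddSubgroup.closure (vdkSet A n))
    (a : A) (u w : (TruncPoly A (n + 1))ˣ)
    (hu : (u : TruncPoly A (n + 1)) = 1 + tConst (n + 1) a * tSigma A (n + 1) ^ n) :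
    K2M.symbol u w ∈ NN A n := by
  have hU := isUnit_one_add_inl_eps (tConst (n + 1) a)
  set U : (DualNumber (TruncPoly A (n + 1)))ˣ := hU.unit with hUdef
  set W : (DualNumber (TruncPoly A (n + 1)))ˣ := Units.map
    ((TrivSqZeroExt.inlHom (TruncPoly A (n + 1)) (TruncPoly A (n + 1)) :
      TruncPoly A (n + 1) →+* DualNumber (TruncPoly A (n + 1))) :
      TruncPoly A (n + 1) →* DualNumber (TruncPoly A (n + 1))) w with hWdef
  have hyker : K2M.symbol (R := DualNumber (TruncPoly A (n + 1))) U W ∈ (K2M.map (dualNumberProj (TruncPoly A (n + 1)))).ker := by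
    rw [AddMonoidHom.mem_ker, K2M.map_symbol]
    have h1 : Units.map ((dualNumberProj (TruncPoly A (n + 1)) :
        DualNumber (TruncPoly A (n + 1)) →+* TruncPoly A (n + 1)) :
        DualNumber (TruncPoly A (n + 1)) →* TruncPoly A (n + 1)) U = 1 := by
      apply Units.ext
      rw [Units.coe_map]
      show dualNumberProj _ (U : DualNumber (TruncPoly A (n + 1))) = 1
      rw [hU.unit_spec, dualNumberProj_apply, fst_one_add_inl_eps]
    rw [h1, K2M.symbol_one_left]
  have hmem := hkerf hn hvdK _ hyker
  rw [K2M.map_symbol] at hmem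
  have e1 : Units.map ((evalEps A n hn :
      DualNumber (TruncPoly A (n + 1)) →+* TruncPoly A (n + 1)) :
      DualNumber (TruncPoly A (n + 1)) →* TruncPoly A (n + 1)) U = u := by
    apply Units.ext
    rw [Units.coe_map]
    show evalEps A n hn (U : DualNumber (TruncPoly A (n + 1))) = _
    rw [hU.unit_spec, evalEps_one_add_inl_eps, hu]
  have e2 : Units.map ((evalEps A n hn :
      DualNumber (TruncPoly A (n + 1)) →+* TruncPoly A (n + 1)) :
      DualNumber (TruncPoly A (n + 1)) →* TruncPoly A (n + 1)) W = w := by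
    apply Units.ext
    rw [Units.coe_map, hWdef, Units.coe_map]
    show evalEps A n hn (TrivSqZeroExt.inl (w : TruncPoly A (n + 1))) = _
    rw [evalEps_inl]
  rwa [e1, e2] at hmem

set_option maxHeartbeats 2000000 in
lemma hstarR [IsLocalRing A] [Algebra ℚ A] (hn : 1 ≤ n)
    (hvdK : (K2M.map (dualNumberProj (TruncPoly A (n + 1)))).ker =
      AddSubgroup.closure (vdkSet A n))
    (a : A) (u w : (TruncPoly A (n + 1))ˣ)
    (hu : (u : TruncPoly A (n + 1)) = 1 + tConst (n + 1) a * tSigma A (n + 1) ^ n) :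
    K2M.symbol w u ∈ NN A n := by
  have hU := isUnit_one_add_inl_eps (tConst (n + 1) a)
  set U : (DualNumber (TruncPoly A (n + 1)))ˣ := hU.unit with hUdef
  set W : (DualNumber (TruncPoly A (n + 1)))ˣ := Units.map
    ((TrivSqZeroExt.inlHom (TruncPoly A (n + 1)) (TruncPoly A (n + 1)) :
      TruncPoly A (n + 1) →+* DualNumber (TruncPoly A (n + 1))) :
      TruncPoly A (n + 1) →* DualNumber (TruncPoly A (n + 1))) w with hWdef
  have hyker : K2M.symbol (R := DualNumber (TruncPoly A (n + 1))) W U ∈ (K2M.map (dualNumberProj (TruncPoly A (n + 1)))).ker := by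
    rw [AddMonoidHom.mem_ker, K2M.map_symbol]
    have h1 : Units.map ((dualNumberProj (TruncPoly A (n + 1)) :
        DualNumber (TruncPoly A (n + 1)) →+* TruncPoly A (n + 1)) :
        DualNumber (TruncPoly A (n + 1)) →* TruncPoly A (n + 1)) U = 1 := by
      apply Units.ext
      rw [Units.coe_map]
      show dualNumberProj _ (U : DualNumber (TruncPoly A (n + 1))) = 1
      rw [hU.unit_spec, dualNumberProj_apply, fst_one_add_inl_eps]
    rw [h1, K2M.symbol_one_right]
  have hmem := hkerf hn hvdK _ hyker
  rw [K2M.map_symbol] at hmem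
  have e1 : Units.map ((evalEps A n hn :
      DualNumber (TruncPoly A (n + 1)) →+* TruncPoly A (n + 1)) :
      DualNumber (TruncPoly A (n + 1)) →* TruncPoly A (n + 1)) U = u := by
    apply Units.ext
    rw [Units.coe_map]
    show evalEps A n hn (U : DualNumber (TruncPoly A (n + 1))) = _
    rw [hU.unit_spec, evalEps_one_add_inl_eps, hu]
  have e2 : Units.map ((evalEps A n hn :
      DualNumber (TruncPoly A (n + 1)) →+* TruncPoly A (n + 1)) :
      DualNumber (TruncPoly A (n + 1)) →* TruncPoly A (n + 1)) W = w := by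
    apply Units.ext
    rw [Units.coe_map, hWdef, Units.coe_map]
    show evalEps A n hn (TrivSqZeroExt.inl (w : TruncPoly A (n + 1))) = _
    rw [evalEps_inl]
  rwa [e2, e1] at hmem

set_option maxHeartbeats 1000000 in
lemma hkerU (k : (TruncPoly A (n + 1))ˣ)
    (hk : Units.map ((truncProj A n : TruncPoly A (n + 1) →+* TruncPoly A n) :
        TruncPoly A (n + 1) →* TruncPoly A n) k = 1) :
    ∃ a : A, (k : TruncPoly A (n + 1)) = 1 + tConst (n + 1) a * tSigma A (n + 1) ^ n := by
  have hval : truncProj A n (k : TruncPoly A (n + 1)) = 1 := by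
    have := congrArg Units.val hk
    rw [Units.coe_map] at this
    exact this
  have h0 : truncProj A n ((k : TruncPoly A (n + 1)) - 1) = 0 := by
    rw [map_sub, map_one, hval, sub_self]
  obtain ⟨a, ha⟩ := ker_truncProj h0
  exact ⟨a, by linear_combination ha⟩

set_option maxHeartbeats 2000000 in
lemma congrN [IsLocalRing A] [Algebra ℚ A] (hn : 1 ≤ n)
    (hvdK : (K2M.map (dualNumberProj (TruncPoly A (n + 1)))).ker =
      AddSubgroup.closure (vdkSet A n))
    (u u' v v' : (TruncPoly A (n + 1))ˣ)
    (hu : Units.map ((truncProj A n : TruncPoly A (n + 1) →+* TruncPoly A n) :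
        TruncPoly A (n + 1) →* TruncPoly A n) u =
      Units.map ((truncProj A n : TruncPoly A (n + 1) →+* TruncPoly A n) :
        TruncPoly A (n + 1) →* TruncPoly A n) u')
    (hv : Units.map ((truncProj A n : TruncPoly A (n + 1) →+* TruncPoly A n) :
        TruncPoly A (n + 1) →* TruncPoly A n) v =
      Units.map ((truncProj A n : TruncPoly A (n + 1) →+* TruncPoly A n) :
        TruncPoly A (n + 1) →* TruncPoly A n) v') :
    K2M.symbol u v - K2M.symbol u' v' ∈ NN A n := by
  obtain ⟨a, ha⟩ := hkerU (u * u'⁻¹) (by rw [map_mul, map_inv, hu, mul_inv_cancel])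
  obtain ⟨b, hb⟩ := hkerU (v * v'⁻¹) (by rw [map_mul, map_inv, hv, mul_inv_cancel])
  have e1 : u = u * u'⁻¹ * u' := by rw [inv_mul_cancel_right]
  have e2 : v = v * v'⁻¹ * v' := by rw [inv_mul_cancel_right]
  have h1 : K2M.symbol u v = K2M.symbol (u * u'⁻¹) v + K2M.symbol u' v := by
    conv_lhs => rw [e1]
    rw [K2M.symbol_mul_left]
  have h2 : K2M.symbol u' v = K2M.symbol u' (v * v'⁻¹) + K2M.symbol u' v' := by
    conv_lhs => rw [e2]
    rw [K2M.symbol_mul_right]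
  have heq : K2M.symbol u v - K2M.symbol u' v'
      = K2M.symbol (u * u'⁻¹) v + K2M.symbol u' (v * v'⁻¹) := by
    rw [h1, h2]; abel
  rw [heq]
  exact add_mem (hstarL hn hvdK a _ v ha) (hstarR hn hvdK b _ u' hb)

end MainAux
section MainAux2

variable (A : Type) [CommRing A] (n : ℕ)

/-- A choice of lift of units along the truncation projection. -/
noncomputable def ulift (hn : 1 ≤ n) : (TruncPoly A n)ˣ → (TruncPoly A (n + 1))ˣ :=
  fun u' => (units_lift (A := A) hn u').choose

lemma ulift_spec (hn : 1 ≤ n) (u' : (TruncPoly A n)ˣ) :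
    Units.map ((truncProj A n : TruncPoly A (n + 1) →+* TruncPoly A n) :
      TruncPoly A (n + 1) →* TruncPoly A n) (ulift A n hn u') = u' :=
  (units_lift (A := A) hn u').choose_spec

/-- The section homomorphism on the free abelian group. -/
noncomputable def lam0 (hn : 1 ≤ n) :
    FreeAbelianGroup ((TruncPoly A n)ˣ × (TruncPoly A n)ˣ) →+
      K2M (TruncPoly A (n + 1)) ⧸ NN A n :=
  FreeAbelianGroup.lift
    (fun p => QuotientAddGroup.mk' (NN A n)
      (K2M.symbol (ulift A n hn p.1) (ulift A n hn p.2)))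

lemma lam0_of (hn : 1 ≤ n) (p : (TruncPoly A n)ˣ × (TruncPoly A n)ˣ) :
    lam0 A n hn (of p) = QuotientAddGroup.mk' (NN A n)
      (K2M.symbol (ulift A n hn p.1) (ulift A n hn p.2)) :=
  FreeAbelianGroup.lift_apply_of _ _

variable {A n}

set_option maxHeartbeats 3000000 in
lemma lam0_rel [IsLocalRing A] [Algebra ℚ A] (hn : 1 ≤ n)
    (hvdK : (K2M.map (dualNumberProj (TruncPoly A (n + 1)))).ker =
      AddSubgroup.closure (vdkSet A n)) :
    ∀ z ∈ K2Rel (TruncPoly A n), lam0 A n hn z = 0 := by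
  suffices h : K2Rel (TruncPoly A n) ≤ (lam0 A n hn).ker from fun z hz => h hz
  rw [K2Rel, AddSubgroup.closure_le]
  rintro z ((⟨u, v, w, rfl⟩ | ⟨u, v, w, rfl⟩) | ⟨u, v, h1, rfl⟩) <;>
    simp only [SetLike.mem_coe, AddMonoidHom.mem_ker, map_sub, lam0_of]
  · have hm : K2M.symbol (ulift A n hn (u * v)) (ulift A n hn w)
        - K2M.symbol (ulift A n hn u * ulift A n hn v) (ulift A n hn w) ∈ NN A n :=
      congrN hn hvdK _ _ _ _
        (by rw [map_mul, ulift_spec, ulift_spec, ulift_spec]) rfl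
    have hsplit := K2M.symbol_mul_left (ulift A n hn u) (ulift A n hn v) (ulift A n hn w)
    have hm2 : K2M.symbol (ulift A n hn (u * v)) (ulift A n hn w)
        - K2M.symbol (ulift A n hn u) (ulift A n hn w)
        - K2M.symbol (ulift A n hn v) (ulift A n hn w) ∈ NN A n := by
      have heq : K2M.symbol (ulift A n hn (u * v)) (ulift A n hn w)
          - K2M.symbol (ulift A n hn u) (ulift A n hn w)
          - K2M.symbol (ulift A n hn v) (ulift A n hn w)
          = K2M.symbol (ulift A n hn (u * v)) (ulift A n hn w)
            - K2M.symbol (ulift A n hn u * ulift A n hn v) (ulift A n hn w) := by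
        rw [hsplit]; abel
      rw [heq]; exact hm
    rw [← map_sub, ← map_sub]
    exact (QuotientAddGroup.eq_zero_iff _).mpr hm2
  · have hm : K2M.symbol (ulift A n hn u) (ulift A n hn (v * w))
        - K2M.symbol (ulift A n hn u) (ulift A n hn v * ulift A n hn w) ∈ NN A n :=
      congrN hn hvdK _ _ _ _ rfl
        (by rw [map_mul, ulift_spec, ulift_spec, ulift_spec])
    have hsplit := K2M.symbol_mul_right (ulift A n hn u) (ulift A n hn v) (ulift A n hn w)
    have hm2 : K2M.symbol (ulift A n hn u) (ulift A n hn (v * w))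
        - K2M.symbol (ulift A n hn u) (ulift A n hn v)
        - K2M.symbol (ulift A n hn u) (ulift A n hn w) ∈ NN A n := by
      have heq : K2M.symbol (ulift A n hn u) (ulift A n hn (v * w))
          - K2M.symbol (ulift A n hn u) (ulift A n hn v)
          - K2M.symbol (ulift A n hn u) (ulift A n hn w)
          = K2M.symbol (ulift A n hn u) (ulift A n hn (v * w))
            - K2M.symbol (ulift A n hn u) (ulift A n hn v * ulift A n hn w) := by
        rw [hsplit]; abel
      rw [heq]; exact hm
    rw [← map_sub, ← map_sub]
    exact (QuotientAddGroup.eq_zero_iff _).mpr hm2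
  · -- Steinberg
    have hval1 : truncProj A n (ulift A n hn u : TruncPoly A (n + 1)) = (u : TruncPoly A n) := by
      have := congrArg Units.val (ulift_spec A n hn u)
      rwa [Units.coe_map] at this
    have hval2 : truncProj A n (ulift A n hn v : TruncPoly A (n + 1)) = (v : TruncPoly A n) := by
      have := congrArg Units.val (ulift_spec A n hn v)
      rwa [Units.coe_map] at this
    have h0 : truncProj A n ((ulift A n hn u : TruncPoly A (n + 1))
        + (ulift A n hn v : TruncPoly A (n + 1)) - 1) = 0 := by
      rw [map_sub, map_add, map_one, hval1, hval2, h1, sub_self]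
    obtain ⟨a, ha⟩ := ker_truncProj h0
    have ht := isUnit_one_add_tc (A := A) hn a
    set t := ht.unit with htdef
    have htv : (t : TruncPoly A (n + 1))
        = (ulift A n hn u : TruncPoly A (n + 1)) + (ulift A n hn v : TruncPoly A (n + 1)) := by
      rw [ht.unit_spec]
      linear_combination -ha
    have hstein : K2M.symbol (ulift A n hn u * t⁻¹) (ulift A n hn v * t⁻¹) = 0 := by
      apply K2M.symbol_steinberg
      have heq : ((ulift A n hn u * t⁻¹ : (TruncPoly A (n + 1))ˣ) : TruncPoly A (n + 1))
          + ((ulift A n hn v * t⁻¹ : (TruncPoly A (n + 1))ˣ) : TruncPoly A (n + 1))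
          = ((ulift A n hn u : TruncPoly A (n + 1)) + (ulift A n hn v : TruncPoly A (n + 1)))
            * ((t⁻¹ : (TruncPoly A (n + 1))ˣ) : TruncPoly A (n + 1)) := by
        rw [Units.val_mul, Units.val_mul]; ring
      rw [heq, ← htv, Units.mul_inv]
    have hdecomp : K2M.symbol (ulift A n hn u) (ulift A n hn v)
        = K2M.symbol (ulift A n hn u * t⁻¹) (ulift A n hn v * t⁻¹)
          + K2M.symbol (ulift A n hn u * t⁻¹) t
          + K2M.symbol t (ulift A n hn v * t⁻¹) + K2M.symbol t t := by
      have e1 : ulift A n hn u = ulift A n hn u * t⁻¹ * t := by rw [inv_mul_cancel_right]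
      have e2 : ulift A n hn v = ulift A n hn v * t⁻¹ * t := by rw [inv_mul_cancel_right]
      have s1 : K2M.symbol (ulift A n hn u) (ulift A n hn v)
          = K2M.symbol (ulift A n hn u * t⁻¹) (ulift A n hn v)
            + K2M.symbol t (ulift A n hn v) := by
        conv_lhs => rw [e1]
        rw [K2M.symbol_mul_left]
      have s2 : K2M.symbol (ulift A n hn u * t⁻¹) (ulift A n hn v)
          = K2M.symbol (ulift A n hn u * t⁻¹) (ulift A n hn v * t⁻¹)
            + K2M.symbol (ulift A n hn u * t⁻¹) t := by
        conv_lhs => rw [e2]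
        rw [K2M.symbol_mul_right]
      have s3 : K2M.symbol t (ulift A n hn v)
          = K2M.symbol t (ulift A n hn v * t⁻¹) + K2M.symbol t t := by
        conv_lhs => rw [e2]
        rw [K2M.symbol_mul_right]
      rw [s1, s2, s3]
      abel
    have hmem : K2M.symbol (ulift A n hn u) (ulift A n hn v) ∈ NN A n := by
      rw [hdecomp, hstein, zero_add]
      refine add_mem (add_mem ?_ ?_) ?_
      · exact hstarR hn hvdK a _ _ ht.unit_spec
      · exact hstarL hn hvdK a _ _ ht.unit_spec
      · exact hstarL hn hvdK a _ _ ht.unit_spec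
    exact (QuotientAddGroup.eq_zero_iff _).mpr hmem

variable (A n)

/-- The descended homomorphism. -/
noncomputable def lam [IsLocalRing A] [Algebra ℚ A] (hn : 1 ≤ n)
    (hvdK : (K2M.map (dualNumberProj (TruncPoly A (n + 1)))).ker =
      AddSubgroup.closure (vdkSet A n)) :
    K2M (TruncPoly A n) →+ K2M (TruncPoly A (n + 1)) ⧸ NN A n :=
  QuotientAddGroup.lift (K2Rel (TruncPoly A n)) (lam0 A n hn) (lam0_rel hn hvdK)

variable {A n}

set_option maxHeartbeats 3000000 in
lemma lam_agree [IsLocalRing A] [Algebra ℚ A] (hn : 1 ≤ n)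
    (hvdK : (K2M.map (dualNumberProj (TruncPoly A (n + 1)))).ker =
      AddSubgroup.closure (vdkSet A n))
    (x : K2M (TruncPoly A (n + 1))) :
    lam A n hn hvdK (K2M.map (truncProj A n) x) = QuotientAddGroup.mk' (NN A n) x := by
  have hhom : ((lam A n hn hvdK).comp ((K2M.map (truncProj A n)).comp
      (QuotientAddGroup.mk' (K2Rel (TruncPoly A (n + 1))))))
      = (QuotientAddGroup.mk' (NN A n)).comp
        (QuotientAddGroup.mk' (K2Rel (TruncPoly A (n + 1)))) := by
    apply FreeAbelianGroup.lift.symm.injective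
    funext p
    show lam A n hn hvdK (K2M.map (truncProj A n) (K2M.symbol p.1 p.2))
      = QuotientAddGroup.mk' (NN A n) (K2M.symbol p.1 p.2)
    rw [K2M.map_symbol]
    show lam0 A n hn (of (Units.map _ p.1, Units.map _ p.2)) = _
    rw [lam0_of]
    have hmem := congrN hn hvdK (ulift A n hn (Units.map _ p.1)) p.1
      (ulift A n hn (Units.map _ p.2)) p.2 (ulift_spec A n hn _) (ulift_spec A n hn _)
    have h0 : QuotientAddGroup.mk' (NN A n)
        (K2M.symbol (ulift A n hn (Units.map _ p.1)) (ulift A n hn (Units.map _ p.2))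
          - K2M.symbol p.1 p.2) = 0 := (QuotientAddGroup.eq_zero_iff _).mpr hmem
    rw [map_sub, sub_eq_zero] at h0
    exact h0
  refine QuotientAddGroup.induction_on x (fun z => ?_)
  exact DFunLike.congr_fun hhom z

set_option maxHeartbeats 2000000 in
lemma hard_incl [IsLocalRing A] [Algebra ℚ A] (hn : 1 ≤ n)
    (hvdK : (K2M.map (dualNumberProj (TruncPoly A (n + 1)))).ker =
      AddSubgroup.closure (vdkSet A n)) :
    (K2M.map (truncProj A n)).ker ≤ NN A n := by
  intro x hx
  rw [AddMonoidHom.mem_ker] at hx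
  have h := lam_agree hn hvdK x
  rw [hx, map_zero] at h
  exact (QuotientAddGroup.eq_zero_iff _).mp h.symm

set_option maxHeartbeats 2000000 in
lemma easy_incl (hn : 1 ≤ n) :
    NN A n ≤ (K2M.map (truncProj A n)).ker := by
  rw [NN, AddSubgroup.closure_le]
  rintro x (⟨c, a, u, v, hu, hv, rfl⟩ | ⟨e, u, v, hu, hv, rfl⟩) <;>
    simp only [SetLike.mem_coe, AddMonoidHom.mem_ker, K2M.map_symbol]
  · have hone : Units.map ((truncProj A n : TruncPoly A (n + 1) →+* TruncPoly A n) :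
        TruncPoly A (n + 1) →* TruncPoly A n) u = 1 := by
      apply Units.ext
      rw [Units.coe_map]
      show truncProj A n (u : TruncPoly A (n + 1)) = 1
      rw [hu, map_add, map_one, map_mul, map_pow, truncProj_tConst, truncProj_tSigma,
        tSigma_pow_self, mul_zero, add_zero]
    rw [hone, K2M.symbol_one_left]
  · have hone : Units.map ((truncProj A n : TruncPoly A (n + 1) →+* TruncPoly A n) :
        TruncPoly A (n + 1) →* TruncPoly A n) u = 1 := by
      apply Units.ext
      rw [Units.coe_map]
      show truncProj A n (u : TruncPoly A (n + 1)) = 1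
      rw [hu, map_add, map_one, map_mul, map_pow, truncProj_tConst, truncProj_tSigma,
        tSigma_pow_self, mul_zero, add_zero]
    rw [hone, K2M.symbol_one_left]

end MainAux2

/-- For a local `ℚ`-algebra `A` and `n ≥ 1`, assuming van der Kallen's
description of `TK₂ᴹ(A[σ]/σ^(n+1))`, the group
`φ_{2,n} = ker (K₂ᴹ(A[σ]/σ^(n+1)) → K₂ᴹ(A[σ]/σ^n))` is generated by symbols
`{1 + cσ^n, a}` and `{1 + eσ^n, 1-σ}` with `a, e ∈ A^*`, `c ∈ A`. -/
theorem phi_two_n_generated (A : Type) [CommRing A] [IsLocalRing A] [Algebra ℚ A]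
    (n : ℕ) (hn : 1 ≤ n)
    -- van der Kallen's theorem for `B = A[σ]/σ^(n+1)`:
    (hvdK : (K2M.map (dualNumberProj (TruncPoly A (n + 1)))).ker =
      AddSubgroup.closure
        { x : K2M (DualNumber (TruncPoly A (n + 1))) |
          (∃ (c : TruncPoly A (n + 1)) (a : Aˣ) (u v : (DualNumber (TruncPoly A (n + 1)))ˣ),
            (u : DualNumber (TruncPoly A (n + 1))) = 1 + TrivSqZeroExt.inl c * DualNumber.eps ∧
            (v : DualNumber (TruncPoly A (n + 1))) = tConstEps (n + 1) (a : A) ∧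
            x = K2M.symbol u v) ∨
          (∃ (e : TruncPoly A (n + 1)) (u v : (DualNumber (TruncPoly A (n + 1)))ˣ),
            (u : DualNumber (TruncPoly A (n + 1))) = 1 + TrivSqZeroExt.inl e * DualNumber.eps ∧
            (v : DualNumber (TruncPoly A (n + 1))) =
              TrivSqZeroExt.inl (1 - tSigma A (n + 1)) ∧
            x = K2M.symbol u v) }) :
    (K2M.map (truncProj A n)).ker =
      AddSubgroup.closure
        { x : K2M (TruncPoly A (n + 1)) |
          (∃ (c : A) (a : Aˣ) (u v : (TruncPoly A (n + 1))ˣ),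
            (u : TruncPoly A (n + 1)) = 1 + tConst (n + 1) c * tSigma A (n + 1) ^ n ∧
            (v : TruncPoly A (n + 1)) = tConst (n + 1) (a : A) ∧
            x = K2M.symbol u v) ∨
          (∃ (e : Aˣ) (u v : (TruncPoly A (n + 1))ˣ),
            (u : TruncPoly A (n + 1)) = 1 + tConst (n + 1) (e : A) * tSigma A (n + 1) ^ n ∧
            (v : TruncPoly A (n + 1)) = 1 - tSigma A (n + 1) ∧
            x = K2M.symbol u v) } := by
  have hvdK' : (K2M.map (dualNumberProj (TruncPoly A (n + 1)))).ker =
      AddSubgroup.closure (vdkSet A n) := hvdK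
  show (K2M.map (truncProj A n)).ker = NN A n
  exact le_antisymm (hard_incl hn hvdK') (easy_incl hn)
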